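/- arXiv:1501.03436 — 2 statements merged into one kernel-verified Lean document; each statement's English description precedes it below -/
import Mathlib

section
/- Let G be a connected finite simple graph on n ≥ 2 vertices with m edges, maximum degree Δ, and diameter D, and let X be a metric space with at least two points. Then λ(G, X) ≥ vol(G) / (Δ² · (1 + S_G)), where S_G = (n(n−1)/2 − m) · D². -/
open scoped Classical
open Finset

/-- Degree of a vertex in a finite simple graph. -/
noncomputable def gdeg {V : Type*} [Fintype V] (G : SimpleGraph V) (v : V) : ℕ :=
  (G.neighborSet v).ncard

/-- The volume of a finite simple graph: the sum of the degrees of all vertices. -/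
noncomputable def gvol {V : Type*} [Fintype V] (G : SimpleGraph V) : ℕ :=
  ∑ v, gdeg G v

/-- The Rayleigh-type quotient `R_f(G, X)` for an embedding `f : V(G) → X` where `X`
carries a distance function `d`.  The sum over ordered pairs of adjacent vertices divided
by `2` is the sum over edges of `G`; the sum over ordered pairs of distinct vertices divided
by `2` is the sum over unordered pairs of distinct vertices of `G`. -/
noncomputable def Rf {V X : Type*} [Fintype V] (G : SimpleGraph V) (d : X → X → ℝ)
    (f : V → X) : ℝ :=
  ((gvol G : ℝ) * ((∑ u, ∑ v, if G.Adj u v then d (f u) (f v) ^ 2 else 0) / 2)) /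
    ((∑ u, ∑ v, if u ≠ v then d (f u) (f v) ^ 2 * (gdeg G u : ℝ) * (gdeg G v : ℝ) else 0) / 2)

/-- `lam G d` is `λ(G, X)`: the infimum of `R_f(G, X)` over nonconstant `f : V(G) → X`. -/
noncomputable def lam {V X : Type*} [Fintype V] (G : SimpleGraph V) (d : X → X → ℝ) : ℝ :=
  sInf {r | ∃ f : V → X, (∃ u v, f u ≠ f v) ∧ r = Rf G d f}

/-- The diameter of a finite simple graph: the maximum shortest-path distance over pairs. -/
noncomputable def gDiam {V : Type*} [Fintype V] (H : SimpleGraph V) : ℕ :=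
  Finset.univ.sup fun p : V × V => H.dist p.1 p.2

/-- The maximum degree of a finite simple graph. -/
noncomputable def gMaxDeg {V : Type*} [Fintype V] (G : SimpleGraph V) : ℕ :=
  Finset.univ.sup (gdeg G)

/-- The minimum degree of a finite simple graph. -/
noncomputable def gMinDeg {V : Type*} [Fintype V] (G : SimpleGraph V) : ℕ :=
  sInf (Set.range (gdeg G))

/-!
Let `E` be the sum of `d(f u, f v)²` over ordered pairs of adjacent vertices. A single edge
contributes at most `E / 2`, so every edge of `G` has length at most `√(E / 2)` in `X`, and
following a geodesic of `G` every pair of vertices lies at distance at most `D √(E / 2)`.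
In the denominator of `R_f`, bound both degrees by `Δ` and split the ordered pairs of distinct
vertices into the edges of `G` (together `E`) and the `n (n - 1) - 2 m` edges of the complement
(each at most `D² E / 2`): the denominator is at most `Δ² (1 + S_G) E`, which is the bound.
-/

section Degrees

variable {V : Type*} [Fintype V] (G : SimpleGraph V)

lemma gdeg_eq_degree (v : V) : gdeg G v = G.degree v := by
  rw [gdeg, Set.ncard_eq_toFinset_card', ← SimpleGraph.card_neighborSet_eq_degree,
    Set.toFinset_card]

lemma gvol_eq_two_mul_ncard_edgeSet : gvol G = 2 * G.edgeSet.ncard := by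
  simp only [gvol, gdeg_eq_degree, G.sum_degrees_eq_twice_card_edges,
    Set.ncard_eq_toFinset_card', Set.toFinset_card, SimpleGraph.edgeFinset_card]

lemma gdeg_le_gMaxDeg (v : V) : gdeg G v ≤ gMaxDeg G :=
  le_sup (mem_univ v)

lemma dist_le_gDiam (u v : V) : G.dist u v ≤ gDiam G :=
  le_sup (f := fun p : V × V => G.dist p.1 p.2) (mem_univ (u, v))

lemma gdeg_compl_add_gdeg (v : V) : gdeg Gᶜ v + gdeg G v + 1 = Fintype.card V := by
  rw [gdeg_eq_degree, gdeg_eq_degree, SimpleGraph.degree_compl]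
  have := G.degree_lt_card_verts v
  omega

lemma sum_gdeg_compl :
    (∑ v, (gdeg Gᶜ v : ℝ)) = Fintype.card V * (Fintype.card V - 1) - gvol G := by
  have h (v : V) : (gdeg Gᶜ v : ℝ) = Fintype.card V - 1 - gdeg G v := by
    rw [← gdeg_compl_add_gdeg G v]; push_cast; ring
  simp only [h, gvol, sum_sub_distrib, sum_const, card_univ, nsmul_eq_mul]
  push_cast
  ring

lemma SimpleGraph.Connected.gdeg_pos [Nontrivial V] (hG : G.Connected) (v : V) :
    0 < gdeg G v :=
  gdeg_eq_degree G v ▸ hG.preconnected.degree_pos_of_nontrivial v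

end Degrees

lemma dist_le_length_mul_of_adj_le {V X : Type*} [PseudoMetricSpace X] {H : SimpleGraph V}
    {f : V → X} {B : ℝ} (hB : ∀ a b, H.Adj a b → dist (f a) (f b) ≤ B) {u v : V}
    (p : H.Walk u v) :
    dist (f u) (f v) ≤ p.length * B := by
  induction p with
  | nil => simp
  | @cons a b c hab q ih =>
    calc dist (f a) (f c) ≤ dist (f a) (f b) + dist (f b) (f c) := dist_triangle _ _ _
      _ ≤ B + q.length * B := add_le_add (hB a b hab) ih
      _ = (q.cons hab).length * B := by simp only [SimpleGraph.Walk.length_cons]; push_cast; ring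

section Energy

variable {V X : Type*} [Fintype V] [PseudoMetricSpace X]

noncomputable def adjEnergy (H : SimpleGraph V) (f : V → X) : ℝ :=
  ∑ u, ∑ v, if H.Adj u v then dist (f u) (f v) ^ 2 else 0

noncomputable def degWeightedEnergy (G : SimpleGraph V) (f : V → X) : ℝ :=
  ∑ u, ∑ v, if u ≠ v then dist (f u) (f v) ^ 2 * (gdeg G u : ℝ) * (gdeg G v : ℝ) else 0

lemma Rf_dist_eq (G : SimpleGraph V) (f : V → X) :
    Rf G (fun x y : X => dist x y) f =
      gvol G * (adjEnergy G f / 2) / (degWeightedEnergy G f / 2) :=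
  rfl

lemma adjEnergy_nonneg (H : SimpleGraph V) (f : V → X) : 0 ≤ adjEnergy H f :=
  sum_nonneg fun _ _ => sum_nonneg fun _ _ => by positivity

lemma two_mul_sq_dist_le_adjEnergy {H : SimpleGraph V} (f : V → X) {x y : V} (hxy : H.Adj x y) :
    2 * dist (f x) (f y) ^ 2 ≤ adjEnergy H f := by
  let g : V × V → ℝ := fun p => if H.Adj p.1 p.2 then dist (f p.1) (f p.2) ^ 2 else 0
  have hpair : ∑ p ∈ {(x, y), (y, x)}, g p = 2 * dist (f x) (f y) ^ 2 := by
    rw [sum_pair (by simp [hxy.ne, Prod.ext_iff])]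
    simp [g, hxy, hxy.symm, dist_comm, two_mul]
  rw [← hpair, adjEnergy, ← Fintype.sum_prod_type']
  exact sum_le_univ_sum_of_nonneg fun p => by positivity

lemma adjEnergy_le_sum_gdeg_mul (H : SimpleGraph V) (f : V → X) {c : ℝ}
    (hc : ∀ u v, H.Adj u v → dist (f u) (f v) ^ 2 ≤ c) :
    adjEnergy H f ≤ (∑ v, (gdeg H v : ℝ)) * c := by
  rw [sum_mul, adjEnergy]
  refine sum_le_sum fun u _ => ?_
  rw [← sum_filter, gdeg_eq_degree, ← H.card_neighborFinset_eq_degree,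
    H.neighborFinset_eq_filter, ← nsmul_eq_mul]
  exact sum_le_card_nsmul _ _ _ fun v hv => hc u v (mem_filter.1 hv).2

lemma adjEnergy_top (G : SimpleGraph V) (f : V → X) :
    adjEnergy ⊤ f = adjEnergy G f + adjEnergy Gᶜ f := by
  simp only [adjEnergy, ← sum_add_distrib]
  refine sum_congr rfl fun u _ => sum_congr rfl fun v _ => ?_
  by_cases huv : G.Adj u v
  · simp [huv, huv.ne]
  · by_cases h : u = v <;> simp [huv, h]

lemma sq_dist_le_of_connected {G : SimpleGraph V} (hG : G.Connected) (f : V → X) (u v : V) :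
    dist (f u) (f v) ^ 2 ≤ (gDiam G : ℝ) ^ 2 * (adjEnergy G f / 2) := by
  set B := √(adjEnergy G f / 2)
  have hB : ∀ a b, G.Adj a b → dist (f a) (f b) ≤ B := fun a b hab =>
    Real.le_sqrt_of_sq_le (by linarith [two_mul_sq_dist_le_adjEnergy f hab])
  obtain ⟨p, hp⟩ := hG.exists_walk_length_eq_dist u v
  have hpD : (p.length : ℝ) ≤ gDiam G := by exact_mod_cast hp ▸ dist_le_gDiam G u v
  have huv : dist (f u) (f v) ≤ gDiam G * B :=
    (dist_le_length_mul_of_adj_le hB p).trans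
      (mul_le_mul_of_nonneg_right hpD (Real.sqrt_nonneg _))
  calc dist (f u) (f v) ^ 2 ≤ (gDiam G * B) ^ 2 := pow_le_pow_left₀ dist_nonneg huv 2
    _ = (gDiam G : ℝ) ^ 2 * (adjEnergy G f / 2) := by
      rw [mul_pow, Real.sq_sqrt (by linarith [adjEnergy_nonneg G f])]

lemma degWeightedEnergy_le (G : SimpleGraph V) (f : V → X) :
    degWeightedEnergy G f ≤ (gMaxDeg G : ℝ) ^ 2 * adjEnergy ⊤ f := by
  have hΔ (v : V) : (gdeg G v : ℝ) ≤ gMaxDeg G := by exact_mod_cast gdeg_le_gMaxDeg G v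
  simp only [degWeightedEnergy, adjEnergy, mul_sum, SimpleGraph.top_adj]
  refine sum_le_sum fun u _ => sum_le_sum fun v _ => ?_
  split_ifs
  · calc dist (f u) (f v) ^ 2 * gdeg G u * gdeg G v
          = dist (f u) (f v) ^ 2 * (gdeg G u * gdeg G v) := by ring
      _ ≤ dist (f u) (f v) ^ 2 * (gMaxDeg G * gMaxDeg G) :=
        mul_le_mul_of_nonneg_left (mul_le_mul (hΔ u) (hΔ v) (by positivity) (by positivity))
          (by positivity)
      _ = _ := by ring
  · simp

lemma degWeightedEnergy_le_of_connected {G : SimpleGraph V} (hG : G.Connected) (f : V → X) :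
    degWeightedEnergy G f ≤ (gMaxDeg G : ℝ) ^ 2 * (1 + ((Fintype.card V : ℝ) *
      ((Fintype.card V : ℝ) - 1) / 2 - (G.edgeSet.ncard : ℝ)) * (gDiam G : ℝ) ^ 2) *
        adjEnergy G f := by
  have hcompl : adjEnergy Gᶜ f ≤ (Fintype.card V * (Fintype.card V - 1) - gvol G) *
      ((gDiam G : ℝ) ^ 2 * (adjEnergy G f / 2)) :=
    sum_gdeg_compl G ▸
      adjEnergy_le_sum_gdeg_mul Gᶜ f fun u v _ => sq_dist_le_of_connected hG f u v
  have hvol : (gvol G : ℝ) = 2 * G.edgeSet.ncard := by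
    exact_mod_cast gvol_eq_two_mul_ncard_edgeSet G
  calc degWeightedEnergy G f ≤ (gMaxDeg G : ℝ) ^ 2 * (adjEnergy G f + adjEnergy Gᶜ f) := by
        rw [← adjEnergy_top]; exact degWeightedEnergy_le G f
    _ ≤ (gMaxDeg G : ℝ) ^ 2 * (adjEnergy G f +
          (Fintype.card V * (Fintype.card V - 1) - gvol G) *
            ((gDiam G : ℝ) ^ 2 * (adjEnergy G f / 2))) := by gcongr
    _ = _ := by rw [hvol]; ring

lemma div_le_Rf_of_le_mul {G : SimpleGraph V} {f : V → X} {A : ℝ}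
    (hP : 0 < degWeightedEnergy G f) (hPE : degWeightedEnergy G f ≤ A * adjEnergy G f) :
    gvol G / A ≤ Rf G (fun x y : X => dist x y) f := by
  have hA : 0 < A := pos_of_mul_pos_left (hP.trans_le hPE) (adjEnergy_nonneg G f)
  rw [Rf_dist_eq, div_le_div_iff₀ hA (half_pos hP)]
  linarith [mul_le_mul_of_nonneg_left hPE (Nat.cast_nonneg (α := ℝ) (gvol G))]

end Energy

lemma degWeightedEnergy_pos {V X : Type*} [Fintype V] [MetricSpace X] {G : SimpleGraph V}
    (hG : G.Connected) {f : V → X} {u v : V} (hf : f u ≠ f v) : 0 < degWeightedEnergy G f := by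
  have huv : u ≠ v := fun h => hf (congrArg f h)
  have : Nontrivial V := ⟨⟨u, v, huv⟩⟩
  have hterm (a b : V) :
      0 ≤ if a ≠ b then dist (f a) (f b) ^ 2 * (gdeg G a : ℝ) * (gdeg G b : ℝ) else 0 := by
    split_ifs <;> positivity
  refine sum_pos' (fun a _ => sum_nonneg fun b _ => hterm a b) ⟨u, mem_univ u, ?_⟩
  refine sum_pos' (fun b _ => hterm u b) ⟨v, mem_univ v, ?_⟩
  have hu : (0 : ℝ) < gdeg G u := by exact_mod_cast hG.gdeg_pos G u
  have hv : (0 : ℝ) < gdeg G v := by exact_mod_cast hG.gdeg_pos G v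
  rw [if_pos huv]
  have := dist_pos.2 hf
  positivity

/-- For a connected finite simple graph `G` on `n ≥ 2` vertices with `m` edges,
maximum degree `Δ` and diameter `D`, and a metric space `X` with at least two points,
`λ(G, X) ≥ vol(G) / (Δ² (1 + S_G))` where `S_G = (n(n-1)/2 - m) D²`. -/
theorem stmt_3 {V : Type*} [Fintype V] (G : SimpleGraph V)
    (hG : G.Connected) (hV : 2 ≤ Fintype.card V)
    (X : Type*) [MetricSpace X] (hX : ∃ a b : X, a ≠ b) :
    (gvol G : ℝ) / ((gMaxDeg G : ℝ) ^ 2 *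
        (1 + ((Fintype.card V : ℝ) * ((Fintype.card V : ℝ) - 1) / 2 - (G.edgeSet.ncard : ℝ))
            * (gDiam G : ℝ) ^ 2))
      ≤ lam G (fun x y : X => dist x y) := by
  obtain ⟨a, b, hab⟩ := hX
  obtain ⟨u, v, huv⟩ := Fintype.exists_pair_of_one_lt_card hV
  refine le_csInf ⟨_, fun w => if w = u then a else b, ⟨u, v, ?_⟩, rfl⟩ ?_
  · simpa [huv.symm] using hab
  · rintro r ⟨f, ⟨u', v', hf⟩, rfl⟩
    exact div_le_Rf_of_le_mul (degWeightedEnergy_pos hG hf)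
      (degWeightedEnergy_le_of_connected hG f)
end

section
/- Let G be a connected finite simple graph with vol(G) ≥ 6, and let H and H' be connected finite simple graphs on the same vertex set with at least two vertices, with diameters D_H and D_{H'} respectively. Then (5 / (3 · vol(G) · D_H² · D_{H'}²)) · λ(G, H) ≤ λ(G, H') ≤ (3 · vol(G) · D_H² · D_{H'}² / 5) · λ(G, H). -/
open scoped Classical
open Finset

/-!
If `H` is connected, distinct vertices are at `H`-distance at least `1`, while any two
vertices are at `H'`-distance at most `D_{H'}`; hence `d_{H'} ≤ D_{H'} · d_H` pointwise, and
symmetrically `d_H ≤ D_H · d_{H'}`. Both sums in `R_f` are nonnegative combinations of squared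
distances, so the numerator changes by a factor at most `D_{H'}²` and the denominator by a
factor at least `D_H⁻²`; thus `R_f(G,H') ≤ D_H² D_{H'}² R_f(G,H)` for every `f`, and the same
holds for the infima. The constant `3 vol(G) / 5` is at least `1` once `vol(G) ≥ 6`.
-/

namespace SimpleGraph

variable {W : Type*} [Fintype W]

theorem dist_le_gDiam (H : SimpleGraph W) (x y : W) : H.dist x y ≤ gDiam H :=
  Finset.le_sup (f := fun p : W × W => H.dist p.1 p.2) (Finset.mem_univ (x, y))

theorem dist_le_gDiam_mul_dist {H : SimpleGraph W} (hH : H.Connected) (H' : SimpleGraph W)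
    (x y : W) : H'.dist x y ≤ gDiam H' * H.dist x y := by
  rcases eq_or_ne x y with rfl | hxy
  · simp
  · calc H'.dist x y ≤ gDiam H' := dist_le_gDiam H' x y
      _ ≤ gDiam H' * H.dist x y := Nat.le_mul_of_pos_right _ (hH.pos_dist_of_ne hxy)

end SimpleGraph

section Energy

variable {V X : Type*}

noncomputable def energy [Fintype V] (w : V → V → ℝ) (d : X → X → ℝ) (f : V → X) : ℝ :=
  ∑ u, ∑ v, w u v * d (f u) (f v) ^ 2

noncomputable def adjWeight (G : SimpleGraph V) (u v : V) : ℝ :=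
  if G.Adj u v then 1 else 0

noncomputable def degPairWeight [Fintype V] (G : SimpleGraph V) (u v : V) : ℝ :=
  if u ≠ v then (gdeg G u : ℝ) * gdeg G v else 0

theorem adjWeight_nonneg (G : SimpleGraph V) (u v : V) : 0 ≤ adjWeight G u v := by
  unfold adjWeight; split_ifs <;> norm_num

theorem degPairWeight_nonneg [Fintype V] (G : SimpleGraph V) (u v : V) :
    0 ≤ degPairWeight G u v := by
  unfold degPairWeight; split_ifs <;> positivity

theorem energy_nonneg [Fintype V] {w : V → V → ℝ} (hw : ∀ u v, 0 ≤ w u v) (d : X → X → ℝ)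
    (f : V → X) : 0 ≤ energy w d f :=
  sum_nonneg fun u _ => sum_nonneg fun v _ => mul_nonneg (hw u v) (sq_nonneg _)

theorem energy_le_mul_energy [Fintype V] {w : V → V → ℝ} (hw : ∀ u v, 0 ≤ w u v)
    {d d' : X → X → ℝ} {c : ℝ} (h : ∀ x y, d' x y ^ 2 ≤ c * d x y ^ 2) (f : V → X) :
    energy w d' f ≤ c * energy w d f := by
  simp only [energy, mul_sum]
  refine sum_le_sum fun u _ => sum_le_sum fun v _ => ?_
  calc w u v * d' (f u) (f v) ^ 2 ≤ w u v * (c * d (f u) (f v) ^ 2) :=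
        mul_le_mul_of_nonneg_left (h _ _) (hw u v)
    _ = c * (w u v * d (f u) (f v) ^ 2) := by ring

theorem Rf_eq_energy_div [Fintype V] (G : SimpleGraph V) (d : X → X → ℝ) (f : V → X) :
    Rf G d f = gvol G * energy (adjWeight G) d f / energy (degPairWeight G) d f := by
  have hnum : (∑ u, ∑ v, if G.Adj u v then d (f u) (f v) ^ 2 else 0) =
      energy (adjWeight G) d f := by
    simp only [energy, adjWeight, ite_mul, one_mul, zero_mul]
  have hden : (∑ u, ∑ v, if u ≠ v then d (f u) (f v) ^ 2 * (gdeg G u : ℝ) * gdeg G v else 0) =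
      energy (degPairWeight G) d f := by
    simp only [energy, degPairWeight, ite_mul, zero_mul]
    exact sum_congr rfl fun u _ => sum_congr rfl fun v _ => by split_ifs <;> ring
  rw [Rf, hnum, hden, mul_div_assoc, div_div_div_cancel_right₀ two_ne_zero, mul_div_assoc]

theorem Rf_nonneg [Fintype V] (G : SimpleGraph V) (d : X → X → ℝ) (f : V → X) :
    0 ≤ Rf G d f := by
  rw [Rf_eq_energy_div]
  have := energy_nonneg (adjWeight_nonneg G) d f
  have := energy_nonneg (degPairWeight_nonneg G) d f
  positivity

end Energy

theorem div_le_mul_mul_div_of_le {n n' e e' α β γ : ℝ} (hn : 0 ≤ n) (he : 0 ≤ e)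
    (he' : 0 ≤ e') (hα : 0 ≤ α) (hβ : 0 ≤ β) (hn' : n' ≤ α * n) (hee' : e ≤ β * e')
    (he'e : e' ≤ γ * e) : n' / e' ≤ α * β * (n / e) := by
  rcases he'.eq_or_lt with rfl | he'_pos
  · simpa using mul_nonneg (mul_nonneg hα hβ) (div_nonneg hn he)
  have he_pos : 0 < e := by
    rcases he.eq_or_lt with rfl | h
    · linarith [mul_zero γ]
    · exact h
  rw [← mul_div_assoc, div_le_div_iff₀ he'_pos he_pos]
  calc n' * e ≤ α * n * e := mul_le_mul_of_nonneg_right hn' he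
    _ ≤ α * n * (β * e') := mul_le_mul_of_nonneg_left hee' (mul_nonneg hα hn)
    _ = α * β * n * e' := by ring

section Comparison

variable {V X : Type*} [Fintype V]

theorem Rf_le_mul_Rf (G : SimpleGraph V) {d d' : X → X → ℝ} (hd : ∀ x y, 0 ≤ d x y)
    (hd' : ∀ x y, 0 ≤ d' x y) {a b : ℝ} (had : ∀ x y, d' x y ≤ a * d x y)
    (hbd : ∀ x y, d x y ≤ b * d' x y) (f : V → X) :
    Rf G d' f ≤ a ^ 2 * b ^ 2 * Rf G d f := by
  have sq_le {d₁ d₂ : X → X → ℝ} {c : ℝ} (h₁ : ∀ x y, 0 ≤ d₁ x y)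
      (h : ∀ x y, d₁ x y ≤ c * d₂ x y) (x y : X) : d₁ x y ^ 2 ≤ c ^ 2 * d₂ x y ^ 2 := by
    rw [← mul_pow]; exact pow_le_pow_left₀ (h₁ x y) (h x y) 2
  have hvol : (0 : ℝ) ≤ gvol G := Nat.cast_nonneg _
  simp only [Rf_eq_energy_div]
  refine div_le_mul_mul_div_of_le (mul_nonneg hvol (energy_nonneg (adjWeight_nonneg G) d f))
    (energy_nonneg (degPairWeight_nonneg G) d f) (energy_nonneg (degPairWeight_nonneg G) d' f)
    (sq_nonneg a) (sq_nonneg b) ?_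
    (energy_le_mul_energy (degPairWeight_nonneg G) (sq_le hd hbd) f)
    (energy_le_mul_energy (degPairWeight_nonneg G) (sq_le hd' had) f)
  rw [mul_left_comm]
  exact mul_le_mul_of_nonneg_left
    (energy_le_mul_energy (adjWeight_nonneg G) (sq_le hd' had) f) hvol

theorem lam_nonneg (G : SimpleGraph V) (d : X → X → ℝ) : 0 ≤ lam G d :=
  Real.sInf_nonneg fun _ ⟨f, _, hr⟩ => hr ▸ Rf_nonneg G d f

theorem lam_le_mul_lam (G : SimpleGraph V) {d d' : X → X → ℝ} {C : ℝ} (hC : 0 ≤ C)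
    (h : ∀ f, Rf G d' f ≤ C * Rf G d f) : lam G d' ≤ C * lam G d := by
  by_cases hex : ∃ f : V → X, ∃ u v, f u ≠ f v
  · obtain ⟨f₀, hf₀⟩ := hex
    unfold lam
    rw [← smul_eq_mul, ← Real.sInf_smul_of_nonneg hC]
    refine le_csInf ⟨_, Set.smul_mem_smul_set ⟨f₀, hf₀, rfl⟩⟩ ?_
    rintro _ ⟨_, ⟨f, hf, rfl⟩, rfl⟩
    have hbdd : BddBelow {r | ∃ f : V → X, (∃ u v, f u ≠ f v) ∧ r = Rf G d' f} :=
      ⟨0, fun _ ⟨g, _, hr⟩ => hr ▸ Rf_nonneg G d' g⟩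
    exact (csInf_le hbdd ⟨f, hf, rfl⟩).trans (h f)
  · have hconst (f : V → X) : ¬∃ u v, f u ≠ f v := fun hf => hex ⟨f, hf⟩
    simp only [lam, hconst, false_and, exists_false, Set.ofPred_false, Real.sInf_empty, mul_zero,
      le_refl]

theorem lam_dist_le_gDiam_sq_mul (G : SimpleGraph V) {W : Type*} [Fintype W] {H H' : SimpleGraph W}
    (hH : H.Connected) (hH' : H'.Connected) :
    lam G (fun i j => (H'.dist i j : ℝ)) ≤
      (gDiam H : ℝ) ^ 2 * (gDiam H' : ℝ) ^ 2 * lam G (fun i j => (H.dist i j : ℝ)) := by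
  have hdist {K K' : SimpleGraph W} (hK : K.Connected) (x y : W) :
      (K'.dist x y : ℝ) ≤ gDiam K' * K.dist x y := by
    exact_mod_cast K.dist_le_gDiam_mul_dist hK K' x y
  rw [mul_comm ((gDiam H : ℝ) ^ 2)]
  exact lam_le_mul_lam G (by positivity) <| Rf_le_mul_Rf G (fun _ _ => Nat.cast_nonneg _)
    (fun _ _ => Nat.cast_nonneg _) (hdist hH) (hdist hH')

end Comparison

theorem stmt_10_general {V W : Type*} [Fintype V] [Fintype W]
    (G : SimpleGraph V) (H H' : SimpleGraph W)
    (hvol : 6 ≤ gvol G)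
    (hH : H.Connected) (hH' : H'.Connected) :
    5 / (3 * (gvol G : ℝ) * (gDiam H : ℝ) ^ 2 * (gDiam H' : ℝ) ^ 2) *
        lam G (fun i j => (H.dist i j : ℝ))
      ≤ lam G (fun i j => (H'.dist i j : ℝ)) ∧
    lam G (fun i j => (H'.dist i j : ℝ)) ≤
      3 * (gvol G : ℝ) * (gDiam H : ℝ) ^ 2 * (gDiam H' : ℝ) ^ 2 / 5 *
        lam G (fun i j => (H.dist i j : ℝ)) := by
  set lamH := lam G (fun i j => (H.dist i j : ℝ))
  set lamH' := lam G (fun i j => (H'.dist i j : ℝ))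
  set C : ℝ := (gDiam H : ℝ) ^ 2 * (gDiam H' : ℝ) ^ 2
  have hup : lamH' ≤ C * lamH := lam_dist_le_gDiam_sq_mul G hH hH'
  have hdown : lamH ≤ C * lamH' := by
    have h := lam_dist_le_gDiam_sq_mul G hH' hH
    rwa [mul_comm ((gDiam H' : ℝ) ^ 2)] at h
  have hvol' : (6 : ℝ) ≤ gvol G := by exact_mod_cast hvol
  constructor
  · calc 5 / (3 * gvol G * (gDiam H : ℝ) ^ 2 * (gDiam H' : ℝ) ^ 2) * lamH
        ≤ 5 / (3 * gvol G * (gDiam H : ℝ) ^ 2 * (gDiam H' : ℝ) ^ 2) * (C * lamH') := by gcongr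
      _ = 5 / (3 * gvol G) * (C / C) * lamH' := by ring
      _ ≤ 1 * 1 * lamH' := by
          gcongr
          · exact lam_nonneg G _
          · rw [div_le_one (by positivity)]; linarith
          · exact div_self_le_one C
      _ = lamH' := by ring
  · calc lamH' ≤ 1 * C * lamH := by rwa [one_mul]
      _ ≤ 3 * gvol G / 5 * C * lamH := by
          gcongr
          · exact lam_nonneg G _
          · rw [le_div_iff₀ (by norm_num)]; linarith
      _ = 3 * gvol G * (gDiam H : ℝ) ^ 2 * (gDiam H' : ℝ) ^ 2 / 5 * lamH := by ring

/-- For a connected finite simple graph `G` with `vol(G) ≥ 6` and connected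
graphs `H`, `H'` on the same vertex set with at least two vertices and diameters `D_H`,
`D_{H'}`, one has
`(5 / (3 vol(G) D_H² D_{H'}²)) λ(G,H) ≤ λ(G,H') ≤ (3 vol(G) D_H² D_{H'}² / 5) λ(G,H)`. -/
theorem stmt_10 {V W : Type*} [Fintype V] [Fintype W]
    (G : SimpleGraph V) (H H' : SimpleGraph W)
    (hG : G.Connected) (hvol : 6 ≤ gvol G)
    (hH : H.Connected) (hH' : H'.Connected) (hk : 2 ≤ Fintype.card W) :
    5 / (3 * (gvol G : ℝ) * (gDiam H : ℝ) ^ 2 * (gDiam H' : ℝ) ^ 2) *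
        lam G (fun i j => (H.dist i j : ℝ))
      ≤ lam G (fun i j => (H'.dist i j : ℝ)) ∧
    lam G (fun i j => (H'.dist i j : ℝ)) ≤
      3 * (gvol G : ℝ) * (gDiam H : ℝ) ^ 2 * (gDiam H' : ℝ) ^ 2 / 5 *
        lam G (fun i j => (H.dist i j : ℝ)) :=
  stmt_10_general G H H' hvol hH hH'
end
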